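/- Let h : ℝ → ℂ be smooth with compact support contained in (0,∞), and for z ∈ ℂ and v > 0 set ℏ_z(v) := ∫_0^∞ (h(√u)/√(2πu))·u^{z/2}·e^{iuv} du. Then for every B ∈ ℕ and every σ > 0 there exists a constant C > 0 (depending on h, B and σ) such that for all z ∈ ℂ with |Re(z)| ≤ σ and all real v ≥ 1, one has |ℏ_z(v)| ≤ C·(1 + |z|)^B·v^{−B}. -/

import Mathlib

open MeasureTheory

/-- `ℏ_z(v) = ∫_0^∞ (h(√u)/√(2πu)) u^{z/2} e^{iuv} du`. -/
noncomputable def hbar (h : ℝ → ℂ) (z : ℂ) (v : ℝ) : ℂ :=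
  ∫ u in Set.Ioi (0 : ℝ),
    (h (Real.sqrt u) / ((Real.sqrt (2 * Real.pi * u) : ℝ) : ℂ)) * (u : ℂ) ^ (z / 2) *
      Complex.exp (Complex.I * (u : ℂ) * (v : ℂ))

/-!
With the amplitude `φ u = h (√u) / √(2πu)`, smooth and compactly supported in `(0, ∞)`,
`ℏ_z(v)` is the Fourier transform of `F_z u = φ u * u ^ (z / 2)` at `-v / (2π)`, so integrating
by parts `B` times gives `|v| ^ B * ‖ℏ_z(v)‖ ≤ ∫ ‖F_z⁽ᴮ⁾‖`. On the support of `φ` we write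
`u ^ (z / 2) = exp (z / 2 * r u)` with `r` smooth on all of `ℝ` and equal to `log` there. Then
`F_z⁽ᴮ⁾` is `exp (z / 2 * r)` times a polynomial of degree `≤ B` in `z / 2` whose coefficients are
smooth, compactly supported and independent of `z`, and `‖exp (z / 2 * r u)‖ ≤ exp (σ * |r u|)`.
-/

open Set Complex FourierTransform
open scoped ContDiff Real

theorem ContDiffOn.contDiff_of_tsupport_subset {𝕜 E F : Type*} [NontriviallyNormedField 𝕜]
    [NormedAddCommGroup E] [NormedSpace 𝕜 E] [NormedAddCommGroup F] [NormedSpace 𝕜 F]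
    {f : E → F} {s : Set E} {n : WithTop ℕ∞} (hf : ContDiffOn 𝕜 n f s) (hs : IsOpen s)
    (hsupp : tsupport f ⊆ s) : ContDiff 𝕜 n f := by
  have hcover : s ∪ (tsupport f)ᶜ = univ :=
    eq_univ_of_forall fun x => (em (x ∈ tsupport f)).imp (@hsupp x) id
  refine contDiff_of_contDiffOn_union_of_isOpen hf ?_ hcover hs (isClosed_tsupport f).isOpen_compl
  exact contDiffOn_const.congr fun x hx => image_eq_zero_of_notMem_tsupport hx

theorem HasCompactSupport.iteratedDeriv {𝕜 F : Type*} [NontriviallyNormedField 𝕜]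
    [NormedAddCommGroup F] [NormedSpace 𝕜 F] {f : 𝕜 → F} (hf : HasCompactSupport f) (n : ℕ) :
    HasCompactSupport (iteratedDeriv n f) := by
  induction n with
  | zero => simpa using hf
  | succ n ih => simpa [iteratedDeriv_succ] using ih.deriv

theorem IsCompact.exists_subset_Icc_of_subset_Ioi {K : Set ℝ} (hK : IsCompact K) {c : ℝ}
    (hKc : K ⊆ Ioi c) : ∃ a b, c < a ∧ a ≤ b ∧ K ⊆ Icc a b := by
  rcases K.eq_empty_or_nonempty with rfl | hne
  · exact ⟨c + 1, c + 1, by linarith, le_rfl, empty_subset _⟩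
  obtain ⟨m, hmK, hmin⟩ := hK.exists_isMinOn hne continuousOn_id
  obtain ⟨b, hb⟩ := hK.bddAbove
  exact ⟨m, b, hKc hmK, hb hmK, fun x hx => ⟨hmin hx, hb hx⟩⟩

theorem exists_contDiff_eqOn_log {K : Set ℝ} (hK : IsCompact K) (hKpos : K ⊆ Ioi 0) :
    ∃ r : ℝ → ℝ, ContDiff ℝ ∞ r ∧ EqOn r Real.log K := by
  obtain ⟨a, b, ha, hab, hKab⟩ := hK.exists_subset_Icc_of_subset_Ioi hKpos
  -- `χ = 1` on `[3a/4, b + a/4] ⊇ [a, b]` and `χ = 0` left of `a / 2`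
  let χ : ContDiffBump ((a + b) / 2) := ⟨(b - a) / 2 + a / 4, b / 2, by linarith, by linarith⟩
  refine ⟨fun u => χ u * Real.log u, ?_, fun u hu => ?_⟩
  · refine ContDiffOn.contDiff_of_tsupport_subset (s := Ioi 0) ?_ isOpen_Ioi ?_
    · exact χ.contDiff.contDiffOn.mul (Real.contDiffOn_log.mono fun u hu => ne_of_gt hu)
    · refine (tsupport_mul_subset_left).trans ?_
      rw [χ.tsupport_eq, Real.closedBall_eq_Icc]
      intro u hu
      simp only [χ, mem_Icc] at hu
      simp only [mem_Ioi]
      linarith [hu.1]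
  · have hu' := hKab hu
    have : χ u = 1 := by
      refine χ.one_of_mem_closedBall ?_
      rw [Real.closedBall_eq_Icc]
      constructor <;> simp only [χ] <;> linarith [hu'.1, hu'.2]
    simp [this]

section ExpMulCoeff

variable (φ : ℝ → ℂ) (r : ℝ → ℝ)

/-- The coefficient of `w ^ k` in `iteratedDeriv n (fun u => φ u * exp (w * r u)) / exp (w * r)`,
see `iteratedDeriv_mul_cexp_eq_sum`. -/
noncomputable def expMulCoeff : ℕ → ℕ → ℝ → ℂ
  | 0, 0 => φ
  | 0, _ + 1 => 0
  | n + 1, 0 => deriv (expMulCoeff n 0)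
  | n + 1, k + 1 => fun u => deriv (expMulCoeff n (k + 1)) u + expMulCoeff n k u * deriv r u

variable {φ r}

theorem contDiff_expMulCoeff (hφ : ContDiff ℝ ∞ φ) (hr : ContDiff ℝ ∞ r) :
    ∀ n k, ContDiff ℝ ∞ (expMulCoeff φ r n k)
  | 0, 0 => hφ
  | 0, _ + 1 => contDiff_const
  | n + 1, 0 => (contDiff_expMulCoeff hφ hr n 0).iterate_deriv 1
  | n + 1, k + 1 => ((contDiff_expMulCoeff hφ hr n (k + 1)).iterate_deriv 1).add
      ((contDiff_expMulCoeff hφ hr n k).mul (ofRealCLM.contDiff.comp (hr.iterate_deriv 1)))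

theorem hasCompactSupport_expMulCoeff (hφ : HasCompactSupport φ) :
    ∀ n k, HasCompactSupport (expMulCoeff φ r n k)
  | 0, 0 => hφ
  | 0, _ + 1 => HasCompactSupport.zero
  | n + 1, 0 => (hasCompactSupport_expMulCoeff hφ n 0).deriv
  | n + 1, k + 1 => (hasCompactSupport_expMulCoeff hφ n (k + 1)).deriv.add
      (hasCompactSupport_expMulCoeff hφ n k).mul_right

theorem expMulCoeff_eq_zero_of_lt : ∀ {n k}, n < k → expMulCoeff φ r n k = 0
  | 0, _ + 1, _ => rfl
  | n + 1, k + 1, h => by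
    have h₁ : expMulCoeff φ r n (k + 1) = 0 := expMulCoeff_eq_zero_of_lt (by omega)
    have h₂ : expMulCoeff φ r n k = 0 := expMulCoeff_eq_zero_of_lt (by omega)
    ext u
    simp [expMulCoeff, h₁, h₂]

theorem hasDerivAt_mul_cexp {g : ℝ → ℂ} {g' : ℂ} {r' : ℝ} {u : ℝ} (hg : HasDerivAt g g' u)
    (hr : HasDerivAt r r' u) (w : ℂ) :
    HasDerivAt (fun u => g u * exp (w * r u)) ((g' + w * g u * r') * exp (w * r u)) u :=
  (hg.mul (hr.ofReal_comp.const_mul w).cexp).congr_deriv (by ring)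

theorem iteratedDeriv_mul_cexp_eq_sum (hφ : ContDiff ℝ ∞ φ) (hr : ContDiff ℝ ∞ r) (w : ℂ)
    (n : ℕ) :
    iteratedDeriv n (fun u => φ u * exp (w * r u)) =
      fun u => (∑ k ∈ Finset.range (n + 1), w ^ k * expMulCoeff φ r n k u) * exp (w * r u) := by
  induction n with
  | zero => ext u; simp [expMulCoeff]
  | succ n ih =>
    have hc := contDiff_expMulCoeff hφ hr
    ext u
    rw [iteratedDeriv_succ, ih]
    have hsum : HasDerivAt (fun u => ∑ k ∈ Finset.range (n + 1), w ^ k * expMulCoeff φ r n k u)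
        (∑ k ∈ Finset.range (n + 1), w ^ k * deriv (expMulCoeff φ r n k) u) u :=
      HasDerivAt.fun_sum fun k _ =>
        ((hc n k).differentiable (by simp) u).hasDerivAt.const_mul _
    rw [(hasDerivAt_mul_cexp hsum ((hr.differentiable (by simp) u).hasDerivAt) w).deriv]
    congr 1
    have hlast : deriv (expMulCoeff φ r n (n + 1)) u = 0 := by
      simp [expMulCoeff_eq_zero_of_lt (Nat.lt_succ_self n)]
    rw [Finset.sum_range_succ' (fun k => w ^ k * expMulCoeff φ r (n + 1) k u)]
    simp only [expMulCoeff, mul_add, Finset.sum_add_distrib]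
    rw [Finset.sum_range_succ' (fun k => w ^ k * deriv (expMulCoeff φ r n k) u),
      Finset.sum_range_succ (fun k => w ^ (k + 1) * deriv (expMulCoeff φ r n (k + 1)) u), hlast,
      Finset.mul_sum, Finset.sum_mul]
    have hshift : ∑ k ∈ Finset.range (n + 1), w * (w ^ k * expMulCoeff φ r n k u) * deriv r u =
        ∑ k ∈ Finset.range (n + 1), w ^ (k + 1) * (expMulCoeff φ r n k u * deriv r u) :=
      Finset.sum_congr rfl fun k _ => by ring
    rw [hshift]
    ring

theorem exists_integral_norm_iteratedDeriv_mul_cexp_le (hφ : ContDiff ℝ ∞ φ)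
    (hφc : HasCompactSupport φ) (hr : ContDiff ℝ ∞ r) (n : ℕ) (σ : ℝ) :
    ∃ C, ∀ w : ℂ, |w.re| ≤ σ →
      ∫ u, ‖iteratedDeriv n (fun u => φ u * exp (w * r u)) u‖ ≤ C * (1 + ‖w‖) ^ n := by
  set g : ℝ → ℝ := fun u =>
    ∑ k ∈ Finset.range (n + 1), ‖expMulCoeff φ r n k u‖ * Real.exp (σ * |r u|)
  have hg : Integrable g := integrable_finsetSum _ fun k _ =>
    (((contDiff_expMulCoeff hφ hr n k).continuous.norm.mul
      (by fun_prop : Continuous fun u => Real.exp (σ * |r u|))).integrable_of_hasCompactSupport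
      (hasCompactSupport_expMulCoeff hφc n k).norm.mul_right)
  refine ⟨∫ u, g u, fun w hw => ?_⟩
  have hexp : ∀ u, ‖exp (w * r u)‖ ≤ Real.exp (σ * |r u|) := fun u => by
    rw [norm_exp, re_mul_ofReal, Real.exp_le_exp]
    calc w.re * r u ≤ |w.re| * |r u| := by rw [← abs_mul]; exact le_abs_self _
      _ ≤ σ * |r u| := by gcongr
  have hpow : ∀ k ∈ Finset.range (n + 1), ‖w‖ ^ k ≤ (1 + ‖w‖) ^ n := fun k hk =>
    (pow_le_pow_left₀ (norm_nonneg w) (by linarith) k).trans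
      (pow_le_pow_right₀ (by linarith [norm_nonneg w]) (Finset.mem_range_succ_iff.1 hk))
  have hpt : ∀ u, ‖iteratedDeriv n (fun u => φ u * exp (w * r u)) u‖ ≤ (1 + ‖w‖) ^ n * g u := by
    intro u
    rw [iteratedDeriv_mul_cexp_eq_sum hφ hr, norm_mul]
    calc ‖∑ k ∈ Finset.range (n + 1), w ^ k * expMulCoeff φ r n k u‖ * ‖exp (w * r u)‖
        ≤ (∑ k ∈ Finset.range (n + 1), (1 + ‖w‖) ^ n * ‖expMulCoeff φ r n k u‖) *
            Real.exp (σ * |r u|) := by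
          refine mul_le_mul (norm_sum_le_of_le _ fun k hk => ?_) (hexp u) (norm_nonneg _)
            (by positivity)
          rw [norm_mul, norm_pow]
          gcongr
          exact hpow k hk
      _ = (1 + ‖w‖) ^ n * g u := by simp only [g, ← Finset.mul_sum, Finset.sum_mul, mul_assoc]
  calc ∫ u, ‖iteratedDeriv n (fun u => φ u * exp (w * r u)) u‖
      ≤ ∫ u, (1 + ‖w‖) ^ n * g u :=
        integral_mono_of_nonneg (ae_of_all _ fun _ => norm_nonneg _) (hg.const_mul _)
          (ae_of_all _ hpt)
    _ = (∫ u, g u) * (1 + ‖w‖) ^ n := by rw [integral_const_mul, mul_comm]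

end ExpMulCoeff

theorem abs_mul_pow_mul_norm_fourier_le {f : ℝ → ℂ} (hf : ContDiff ℝ ∞ f)
    (hfc : HasCompactSupport f) (n : ℕ) (ξ : ℝ) :
    (2 * π * |ξ|) ^ n * ‖𝓕 f ξ‖ ≤ ∫ u, ‖iteratedDeriv n f u‖ := by
  have hint : ∀ k : ℕ, Integrable (iteratedDeriv k f) := fun k =>
    (hf.continuous_iteratedDeriv k (mod_cast le_top)).integrable_of_hasCompactSupport
      (hfc.iteratedDeriv k)
  calc (2 * π * |ξ|) ^ n * ‖𝓕 f ξ‖ = ‖𝓕 (iteratedDeriv n f) ξ‖ := by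
        rw [Real.fourier_iteratedDeriv hf (fun k _ => hint k) le_top, norm_smul]
        simp [abs_of_pos Real.pi_pos]
    _ ≤ ∫ u, ‖iteratedDeriv n f u‖ := by
        rw [Real.fourier_real_eq]
        exact (norm_integral_le_integral_norm _).trans_eq (by simp [Circle.norm_smul])

theorem setIntegral_Ioi_mul_cexp_eq_fourier {F : ℝ → ℂ} (hF : ∀ u ≤ 0, F u = 0) (v : ℝ) :
    ∫ u in Ioi 0, F u * exp (I * u * v) = 𝓕 F (-v / (2 * π)) := by
  rw [setIntegral_eq_integral_of_forall_compl_eq_zero fun u hu => by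
      rw [hF u (not_lt.1 hu), zero_mul], Real.fourier_real_eq_integral_exp_smul]
  congr 1 with u
  rw [smul_eq_mul, mul_comm]
  congr 2
  push_cast
  field_simp

theorem exists_abs_pow_mul_norm_integral_cpow_le {φ : ℝ → ℂ} (hφ : ContDiff ℝ ∞ φ)
    (hφc : HasCompactSupport φ) (hφpos : tsupport φ ⊆ Ioi 0) (n : ℕ) (σ : ℝ) :
    ∃ C, ∀ w : ℂ, |w.re| ≤ σ → ∀ v : ℝ,
      |v| ^ n * ‖∫ u in Ioi 0, φ u * (u : ℂ) ^ w * exp (I * u * v)‖ ≤ C * (1 + ‖w‖) ^ n := by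
  obtain ⟨r, hr, hrlog⟩ := exists_contDiff_eqOn_log hφc hφpos
  obtain ⟨C, hC⟩ := exists_integral_norm_iteratedDeriv_mul_cexp_le hφ hφc hr n σ
  refine ⟨C, fun w hw v => ?_⟩
  have hcpow : ∀ u : ℝ, φ u * (u : ℂ) ^ w = φ u * exp (w * r u) := fun u => by
    by_cases hu : u ∈ tsupport φ
    · rw [hrlog hu, ofReal_log (hφpos hu).le,
        cpow_def_of_ne_zero (ofReal_ne_zero.2 (hφpos hu).ne'), mul_comm w]
    · simp [image_eq_zero_of_notMem_tsupport hu]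
  have hF : ∀ u ≤ 0, φ u * exp (w * r u) = 0 := fun u hu => by
    rw [image_eq_zero_of_notMem_tsupport fun h => not_lt.2 hu (hφpos h), zero_mul]
  simp_rw [hcpow]
  rw [setIntegral_Ioi_mul_cexp_eq_fourier hF]
  calc |v| ^ n * ‖𝓕 (fun u => φ u * exp (w * r u)) (-v / (2 * π))‖
      = (2 * π * |-v / (2 * π)|) ^ n * ‖𝓕 (fun u => φ u * exp (w * r u)) (-v / (2 * π))‖ := by
        rw [abs_div, abs_neg, abs_of_pos (by positivity : (0 : ℝ) < 2 * π)]
        field_simp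
    _ ≤ ∫ u, ‖iteratedDeriv n (fun u => φ u * exp (w * r u)) u‖ :=
        abs_mul_pow_mul_norm_fourier_le
          (hφ.mul (contDiff_const.mul (ofRealCLM.contDiff.comp hr)).cexp) hφc.mul_right n _
    _ ≤ C * (1 + ‖w‖) ^ n := hC w hw

noncomputable def hbarAmplitude (h : ℝ → ℂ) (u : ℝ) : ℂ :=
  h (Real.sqrt u) / ((Real.sqrt (2 * π * u) : ℝ) : ℂ)

section hbarAmplitude

variable {h : ℝ → ℂ}

theorem tsupport_hbarAmplitude_subset (hpos : tsupport h ⊆ Ioi 0) :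
    tsupport (hbarAmplitude h) ⊆ (· ^ 2) '' tsupport h := by
  have hsub : Function.support (hbarAmplitude h) ⊆ Function.support (h ∘ Real.sqrt) :=
    Function.support_subset_iff'.2 fun u hu => by
      simp [hbarAmplitude, show h (Real.sqrt u) = 0 from Function.notMem_support.1 hu]
  refine (closure_mono hsub).trans
    ((tsupport_comp_subset_preimage h Real.continuous_sqrt).trans fun u hu => ?_)
  exact ⟨Real.sqrt u, hu, Real.sq_sqrt (Real.sqrt_pos.1 (hpos hu)).le⟩

theorem tsupport_hbarAmplitude_subset_Ioi (hpos : tsupport h ⊆ Ioi 0) :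
    tsupport (hbarAmplitude h) ⊆ Ioi 0 := by
  rintro _ hu
  obtain ⟨x, hx, rfl⟩ := tsupport_hbarAmplitude_subset hpos hu
  exact pow_pos (mem_Ioi.1 (hpos hx)) 2

theorem hasCompactSupport_hbarAmplitude (hsupp : HasCompactSupport h)
    (hpos : tsupport h ⊆ Ioi 0) : HasCompactSupport (hbarAmplitude h) :=
  (hsupp.image (continuous_pow 2)).of_isClosed_subset (isClosed_tsupport _)
    (tsupport_hbarAmplitude_subset hpos)

theorem contDiff_hbarAmplitude (hsm : ContDiff ℝ ∞ h) (hpos : tsupport h ⊆ Ioi 0) :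
    ContDiff ℝ ∞ (hbarAmplitude h) := by
  refine ContDiffOn.contDiff_of_tsupport_subset ?_ isOpen_Ioi
    (tsupport_hbarAmplitude_subset_Ioi hpos)
  have hsqrt : ContDiffOn ℝ ∞ Real.sqrt (Ioi 0) :=
    contDiffOn_id.sqrt fun u hu => ne_of_gt hu
  have hnorm : ContDiffOn ℝ ∞ (fun u : ℝ => (Real.sqrt (2 * π * u))⁻¹) (Ioi 0) :=
    ((contDiffOn_const.mul contDiffOn_id).sqrt fun u hu => (mul_pos Real.two_pi_pos hu).ne').inv
      fun u hu => (Real.sqrt_pos.2 (mul_pos Real.two_pi_pos hu)).ne'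
  refine ((hsm.comp_contDiffOn hsqrt).mul (ofRealCLM.contDiff.comp_contDiffOn hnorm)).congr
    fun u _ => ?_
  simp [hbarAmplitude, div_eq_mul_inv]

end hbarAmplitude

/-- Decay bound: `ℏ_z(v) ≪_{Re(z), B} (1 + |z|)^B v^{−B}`. -/
theorem hbar_decay (h : ℝ → ℂ) (hsm : ContDiff ℝ (⊤ : ℕ∞) h)
    (hsupp : HasCompactSupport h) (hpos : tsupport h ⊆ Set.Ioi 0) :
    ∀ B : ℕ, ∀ σ : ℝ, 0 < σ → ∃ C : ℝ, 0 < C ∧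
      ∀ z : ℂ, |z.re| ≤ σ → ∀ v : ℝ, 1 ≤ v →
        ‖hbar h z v‖ ≤ C * (1 + ‖z‖) ^ B * v ^ (-(B : ℝ)) := by
  intro B σ _
  obtain ⟨C, hC⟩ := exists_abs_pow_mul_norm_integral_cpow_le (contDiff_hbarAmplitude hsm hpos)
    (hasCompactSupport_hbarAmplitude hsupp hpos) (tsupport_hbarAmplitude_subset_Ioi hpos) B σ
  refine ⟨max C 1, by positivity, fun z hz v hv => ?_⟩
  have hv0 : 0 < v := by linarith
  have hre : |(z / 2).re| ≤ σ := by
    rw [div_ofNat_re, abs_div, abs_two]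
    linarith [abs_nonneg z.re]
  have hnorm : ‖z / 2‖ ≤ ‖z‖ := by
    rw [norm_div, RCLike.norm_ofNat]
    linarith [norm_nonneg z]
  have key : v ^ B * ‖hbar h z v‖ ≤ C * (1 + ‖z / 2‖) ^ B := by
    have := hC (z / 2) hre v
    rwa [abs_of_pos hv0] at this
  rw [Real.rpow_neg hv0.le, Real.rpow_natCast, ← div_eq_mul_inv, le_div_iff₀ (by positivity),
    mul_comm]
  calc v ^ B * ‖hbar h z v‖ ≤ C * (1 + ‖z / 2‖) ^ B := key
    _ ≤ max C 1 * (1 + ‖z‖) ^ B := by gcongr; exact le_max_left C 1
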